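/- Under the conformal change ā_{ij} = e^{2σ}a_{ij}, b̄_i = e^{σ}b_i, one has s̄_j = s_j + ½(b² σ_j − ρ b_j), where σ_j = ∂_jσ, ρ = σ_r b^r, b^r = a^{rs}b_s and b² = a^{rs}b_r b_s. -/

import Mathlib

noncomputable section

namespace CD

/-- Partial derivative of `f` in the `j`-th coordinate direction at `x`. -/
def pd {n : ℕ} (f : (Fin n → ℝ) → ℝ) (j : Fin n) (x : Fin n → ℝ) : ℝ :=
  fderiv ℝ f x (Pi.single j 1)

/-- Christoffel symbols `γ^i_{jk} = ½ a^{ir}(∂_j a_{rk} + ∂_k a_{rj} − ∂_r a_{jk})`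
of the Riemannian metric `a`, where `ainv` denotes the inverse matrix field `a^{ij}`. -/
def chr {n : ℕ} (a ainv : (Fin n → ℝ) → Matrix (Fin n) (Fin n) ℝ)
    (x : Fin n → ℝ) (i j k : Fin n) : ℝ :=
  (1 / 2) * ∑ r, ainv x i r *
    (pd (fun z => a z r k) j x + pd (fun z => a z r j) k x - pd (fun z => a z j k) r x)

/-- Covariant derivative `b_{i:j} = ∂_j b_i − b_r γ^r_{ij}`. -/
def covd {n : ℕ} (a ainv : (Fin n → ℝ) → Matrix (Fin n) (Fin n) ℝ)
    (b : (Fin n → ℝ) → Fin n → ℝ) (x : Fin n → ℝ) (i j : Fin n) : ℝ :=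
  pd (fun z => b z i) j x - ∑ r, b x r * chr a ainv x r i j

/-- `r_{ij}` with `2r_{ij} = b_{i:j} + b_{j:i}`. -/
def rlow {n : ℕ} (a ainv : (Fin n → ℝ) → Matrix (Fin n) (Fin n) ℝ)
    (b : (Fin n → ℝ) → Fin n → ℝ) (x : Fin n → ℝ) (i j : Fin n) : ℝ :=
  (covd a ainv b x i j + covd a ainv b x j i) / 2

/-- `s_{ij}` with `2s_{ij} = b_{i:j} − b_{j:i}`. -/
def slow {n : ℕ} (a ainv : (Fin n → ℝ) → Matrix (Fin n) (Fin n) ℝ)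
    (b : (Fin n → ℝ) → Fin n → ℝ) (x : Fin n → ℝ) (i j : Fin n) : ℝ :=
  (covd a ainv b x i j - covd a ainv b x j i) / 2

/-- `b^i = a^{ir} b_r`. -/
def bup {n : ℕ} (ainv : (Fin n → ℝ) → Matrix (Fin n) (Fin n) ℝ)
    (b : (Fin n → ℝ) → Fin n → ℝ) (x : Fin n → ℝ) (i : Fin n) : ℝ :=
  ∑ r, ainv x i r * b x r

/-- `b² = a^{rs} b_r b_s`. -/
def bsq {n : ℕ} (ainv : (Fin n → ℝ) → Matrix (Fin n) (Fin n) ℝ)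
    (b : (Fin n → ℝ) → Fin n → ℝ) (x : Fin n → ℝ) : ℝ :=
  ∑ r, ∑ s, ainv x r s * b x r * b x s

/-- `s^i_j = a^{ir} s_{rj}`. -/
def sup {n : ℕ} (a ainv : (Fin n → ℝ) → Matrix (Fin n) (Fin n) ℝ)
    (b : (Fin n → ℝ) → Fin n → ℝ) (x : Fin n → ℝ) (i j : Fin n) : ℝ :=
  ∑ r, ainv x i r * slow a ainv b x r j

/-- `s_j = b_r s^r_j`. -/
def svec {n : ℕ} (a ainv : (Fin n → ℝ) → Matrix (Fin n) (Fin n) ℝ)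
    (b : (Fin n → ℝ) → Fin n → ℝ) (x : Fin n → ℝ) (j : Fin n) : ℝ :=
  ∑ r, b x r * sup a ainv b x r j

/-- `r_i = b^r r_{ri}`. -/
def rvec {n : ℕ} (a ainv : (Fin n → ℝ) → Matrix (Fin n) (Fin n) ℝ)
    (b : (Fin n → ℝ) → Fin n → ℝ) (x : Fin n → ℝ) (i : Fin n) : ℝ :=
  ∑ r, bup ainv b x r * rlow a ainv b x r i

/-- `α(x,y) = √(a_{ij}(x) y^i y^j)`. -/
def alpha {n : ℕ} (a : (Fin n → ℝ) → Matrix (Fin n) (Fin n) ℝ)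
    (x y : Fin n → ℝ) : ℝ :=
  Real.sqrt (∑ i, ∑ j, a x i j * y i * y j)

/-- `β(x,y) = b_i(x) y^i`. -/
def beta {n : ℕ} (b : (Fin n → ℝ) → Fin n → ℝ) (x y : Fin n → ℝ) : ℝ :=
  ∑ i, b x i * y i

/-- `γ^i_{00} = γ^i_{jk} y^j y^k`. -/
def gam00 {n : ℕ} (a ainv : (Fin n → ℝ) → Matrix (Fin n) (Fin n) ℝ)
    (x y : Fin n → ℝ) (i : Fin n) : ℝ :=
  ∑ j, ∑ k, chr a ainv x i j k * y j * y k

/-- `γ^m_{0m} = γ^m_{jm} y^j`. -/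
def gamTr {n : ℕ} (a ainv : (Fin n → ℝ) → Matrix (Fin n) (Fin n) ℝ)
    (x y : Fin n → ℝ) : ℝ :=
  ∑ m, ∑ j, chr a ainv x m j m * y j

/-- `r_{00} = r_{ij} y^i y^j`. -/
def r00 {n : ℕ} (a ainv : (Fin n → ℝ) → Matrix (Fin n) (Fin n) ℝ)
    (b : (Fin n → ℝ) → Fin n → ℝ) (x y : Fin n → ℝ) : ℝ :=
  ∑ i, ∑ j, rlow a ainv b x i j * y i * y j

/-- `s^i_0 = s^i_j y^j`. -/
def sup0 {n : ℕ} (a ainv : (Fin n → ℝ) → Matrix (Fin n) (Fin n) ℝ)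
    (b : (Fin n → ℝ) → Fin n → ℝ) (x y : Fin n → ℝ) (i : Fin n) : ℝ :=
  ∑ j, sup a ainv b x i j * y j

/-- `s_0 = s_j y^j`. -/
def s0 {n : ℕ} (a ainv : (Fin n → ℝ) → Matrix (Fin n) (Fin n) ℝ)
    (b : (Fin n → ℝ) → Fin n → ℝ) (x y : Fin n → ℝ) : ℝ :=
  ∑ j, svec a ainv b x j * y j

/-- `r_0 = r_i y^i`. -/
def r0 {n : ℕ} (a ainv : (Fin n → ℝ) → Matrix (Fin n) (Fin n) ℝ)
    (b : (Fin n → ℝ) → Fin n → ℝ) (x y : Fin n → ℝ) : ℝ :=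
  ∑ i, rvec a ainv b x i * y i

/-- `σ₀ = σ_i y^i` where `σ_i = ∂_i σ`. -/
def sig0 {n : ℕ} (σ : (Fin n → ℝ) → ℝ) (x y : Fin n → ℝ) : ℝ :=
  ∑ j, pd σ j x * y j

/-- `σ^i = a^{ir} σ_r`. -/
def sigup {n : ℕ} (ainv : (Fin n → ℝ) → Matrix (Fin n) (Fin n) ℝ)
    (σ : (Fin n → ℝ) → ℝ) (x : Fin n → ℝ) (i : Fin n) : ℝ :=
  ∑ r, ainv x i r * pd σ r x

/-- `ρ = σ_r b^r`. -/
def rho {n : ℕ} (ainv : (Fin n → ℝ) → Matrix (Fin n) (Fin n) ℝ)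
    (b : (Fin n → ℝ) → Fin n → ℝ) (σ : (Fin n → ℝ) → ℝ) (x : Fin n → ℝ) : ℝ :=
  ∑ r, pd σ r x * bup ainv b x r

/-- `L_α`. -/
def La (L : ℝ → ℝ → ℝ) (s t : ℝ) : ℝ := deriv (fun u => L u t) s
/-- `L_β`. -/
def Lb (L : ℝ → ℝ → ℝ) (s t : ℝ) : ℝ := deriv (fun u => L s u) t
/-- `L_{αα}`. -/
def Laa (L : ℝ → ℝ → ℝ) (s t : ℝ) : ℝ := deriv (fun u => La L u t) s
/-- `L_{ααα}`. -/
def Laaa (L : ℝ → ℝ → ℝ) (s t : ℝ) : ℝ := deriv (fun u => Laa L u t) s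

/-- `γ² = b²α² − β²`, as a function of `b², α, β`. -/
def gam2 (b2 s t : ℝ) : ℝ := b2 * s ^ 2 - t ^ 2

/-- `Ω = β²L_α + αγ²L_{αα}`. -/
def Om (L : ℝ → ℝ → ℝ) (b2 s t : ℝ) : ℝ :=
  t ^ 2 * La L s t + s * gam2 b2 s t * Laa L s t

/-- `A = αL_αL_{ααα} + 3L_αL_{αα} − 3α(L_{αα})²`. -/
def Afun (L : ℝ → ℝ → ℝ) (s t : ℝ) : ℝ :=
  s * La L s t * Laaa L s t + 3 * La L s t * Laa L s t - 3 * s * (Laa L s t) ^ 2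

/-- `B = αβγ²L_αL_βL_{ααα} + β{(3γ² − β²)L_α − 4αγ²L_{αα}}L_βL_{αα} + ΩLL_{αα}`. -/
def Bcal (L : ℝ → ℝ → ℝ) (b2 s t : ℝ) : ℝ :=
  s * t * gam2 b2 s t * La L s t * Lb L s t * Laaa L s t
    + t * ((3 * gam2 b2 s t - t ^ 2) * La L s t - 4 * s * gam2 b2 s t * Laa L s t)
        * Lb L s t * Laa L s t
    + Om L b2 s t * L s t * Laa L s t

/-- `C* = αβ(r₀₀L_α − 2αs₀L_β)/(2Ω)`. -/
def Cstar {n : ℕ} (L : ℝ → ℝ → ℝ) (a ainv : (Fin n → ℝ) → Matrix (Fin n) (Fin n) ℝ)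
    (b : (Fin n → ℝ) → Fin n → ℝ) (x y : Fin n → ℝ) : ℝ :=
  let s := alpha a x y
  let t := beta b x y
  s * t * (r00 a ainv b x y * La L s t - 2 * s * s0 a ainv b x y * Lb L s t)
    / (2 * Om L (bsq ainv b x) s t)

/-- `D* = αβ[(ρα² − σ₀β)L_α − α(b²σ₀ − ρβ)L_β]/(2Ω)`. -/
def Dstar {n : ℕ} (L : ℝ → ℝ → ℝ) (a ainv : (Fin n → ℝ) → Matrix (Fin n) (Fin n) ℝ)
    (b : (Fin n → ℝ) → Fin n → ℝ) (σ : (Fin n → ℝ) → ℝ) (x y : Fin n → ℝ) : ℝ :=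
  let s := alpha a x y
  let t := beta b x y
  s * t * ((rho ainv b σ x * s ^ 2 - sig0 σ x y * t) * La L s t
      - s * (bsq ainv b x * sig0 σ x y - rho ainv b σ x * t) * Lb L s t)
    / (2 * Om L (bsq ainv b x) s t)

/-- The spray difference vector
`B^i = (αL_β/L_α)s^i_0 + C*[(βL_β/(αL))y^i − (αL_{αα}/L_α)(y^i/α − αb^i/β)]`. -/
def Bi {n : ℕ} (L : ℝ → ℝ → ℝ) (a ainv : (Fin n → ℝ) → Matrix (Fin n) (Fin n) ℝ)
    (b : (Fin n → ℝ) → Fin n → ℝ) (x y : Fin n → ℝ) (i : Fin n) : ℝ :=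
  let s := alpha a x y
  let t := beta b x y
  (s * Lb L s t / La L s t) * sup0 a ainv b x y i
    + Cstar L a ainv b x y *
        ((t * Lb L s t / (s * L s t)) * y i
          - (s * Laa L s t / La L s t) * (y i / s - s * bup ainv b x i / t))

/-- `B^m_m = ∂B^m/∂y^m`. -/
def Bmm {n : ℕ} (L : ℝ → ℝ → ℝ) (a ainv : (Fin n → ℝ) → Matrix (Fin n) (Fin n) ℝ)
    (b : (Fin n → ℝ) → Fin n → ℝ) (x y : Fin n → ℝ) : ℝ :=
  ∑ m, fderiv ℝ (fun y' => Bi L a ainv b x y' m) y (Pi.single m 1)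

/-- `B^{ij} = (αL_β/L_α)(s^i_0y^j − s^j_0y^i) + (α²L_{αα}/(βL_α))C*(b^iy^j − b^jy^i)`. -/
def BijC {n : ℕ} (L : ℝ → ℝ → ℝ) (a ainv : (Fin n → ℝ) → Matrix (Fin n) (Fin n) ℝ)
    (b : (Fin n → ℝ) → Fin n → ℝ) (x y : Fin n → ℝ) (i j : Fin n) : ℝ :=
  let s := alpha a x y
  let t := beta b x y
  (s * Lb L s t / La L s t) * (sup0 a ainv b x y i * y j - sup0 a ainv b x y j * y i)
    + (s ^ 2 * Laa L s t / (t * La L s t)) * Cstar L a ainv b x y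
        * (bup ainv b x i * y j - bup ainv b x j * y i)

/-- The closed formula for `B^{im}_m`. -/
def BimmC {n : ℕ} (L : ℝ → ℝ → ℝ) (a ainv : (Fin n → ℝ) → Matrix (Fin n) (Fin n) ℝ)
    (b : (Fin n → ℝ) → Fin n → ℝ) (x y : Fin n → ℝ) (i : Fin n) : ℝ :=
  let s := alpha a x y
  let t := beta b x y
  let b2 := bsq ainv b x
  let O := Om L b2 s t
  (n + 1 : ℝ) * s * Lb L s t * sup0 a ainv b x y i / La L s t
    + s * ((n + 1 : ℝ) * s ^ 2 * O * Laa L s t * bup ainv b x i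
        + t * gam2 b2 s t * Afun L s t * y i) * r00 a ainv b x y / (2 * O ^ 2)
    - s ^ 2 * ((n + 1 : ℝ) * s ^ 2 * O * Lb L s t * Laa L s t * bup ainv b x i
        + Bcal L b2 s t * y i) * s0 a ainv b x y / (La L s t * O ^ 2)
    - s ^ 3 * Laa L s t * y i * r0 a ainv b x y / O

/-- The conformal correction `K^{im}_m`, given by
`2K^{im}_m = (n+1)(αL_β/L_α)(σ₀b^i − βσ^i)
  + α{((n+1)α²ΩL_{αα}b^i + βγ²Ay^i)/Ω²}(ρα² − σ₀β)
  − [α²{(n+1)α²ΩL_βL_{αα}b^i + By^i}/(L_αΩ²) − α³L_{αα}y^i/Ω](b²σ₀ − ρβ)`. -/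
def Kimm {n : ℕ} (L : ℝ → ℝ → ℝ) (a ainv : (Fin n → ℝ) → Matrix (Fin n) (Fin n) ℝ)
    (b : (Fin n → ℝ) → Fin n → ℝ) (σ : (Fin n → ℝ) → ℝ) (x y : Fin n → ℝ) (i : Fin n) : ℝ :=
  let s := alpha a x y
  let t := beta b x y
  let b2 := bsq ainv b x
  let O := Om L b2 s t
  let σ0 := sig0 σ x y
  let ρ := rho ainv b σ x
  (1 / 2) *
    ((n + 1 : ℝ) * (s * Lb L s t / La L s t) * (σ0 * bup ainv b x i - t * sigup ainv σ x i)
      + s * (((n + 1 : ℝ) * s ^ 2 * O * Laa L s t * bup ainv b x i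
            + t * gam2 b2 s t * Afun L s t * y i) / O ^ 2) * (ρ * s ^ 2 - σ0 * t)
      - (s ^ 2 * ((n + 1 : ℝ) * s ^ 2 * O * Lb L s t * Laa L s t * bup ainv b x i
            + Bcal L b2 s t * y i) / (La L s t * O ^ 2)
          - s ^ 3 * Laa L s t * y i / O) * (b2 * σ0 - ρ * t))

/-- `E` is hp(d): it agrees with a homogeneous polynomial of degree `d` in `y`. -/
def IsHP {n : ℕ} (d : ℕ) (E : (Fin n → ℝ) → ℝ) : Prop :=
  ∃ p : MvPolynomial (Fin n) ℝ, p.IsHomogeneous d ∧ ∀ y, E y = MvPolynomial.eval y p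

/-- The conformally changed metric `ā_{ij} = e^{2σ} a_{ij}`. -/
def abar {n : ℕ} (σ : (Fin n → ℝ) → ℝ) (a : (Fin n → ℝ) → Matrix (Fin n) (Fin n) ℝ) :
    (Fin n → ℝ) → Matrix (Fin n) (Fin n) ℝ :=
  fun z => Real.exp (2 * σ z) • a z

/-- The conformally changed covector `b̄_i = e^{σ} b_i`. -/
def bbar {n : ℕ} (σ : (Fin n → ℝ) → ℝ) (b : (Fin n → ℝ) → Fin n → ℝ) :
    (Fin n → ℝ) → Fin n → ℝ :=
  fun z i => Real.exp (σ z) * b z i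

/-- The special (α,β)-metric `L = α + εβ + kβ²/α`. -/
def Lsp (ε k : ℝ) : ℝ → ℝ → ℝ := fun s t => s + ε * t + k * t ^ 2 / s

lemma pd_mul {n : ℕ} {f g : (Fin n → ℝ) → ℝ} {x : Fin n → ℝ}
    (hf : DifferentiableAt ℝ f x) (hg : DifferentiableAt ℝ g x) (j : Fin n) :
    pd (fun z => f z * g z) j x = pd f j x * g x + f x * pd g j x := by
  unfold pd
  rw [fderiv_fun_mul hf hg]
  simp [smul_eq_mul]
  ring

lemma pd_const_mul {n : ℕ} {f : (Fin n → ℝ) → ℝ} {x : Fin n → ℝ}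
    (hf : DifferentiableAt ℝ f x) (c : ℝ) (j : Fin n) :
    pd (fun z => c * f z) j x = c * pd f j x := by
  unfold pd
  rw [fderiv_const_mul hf c]
  simp

lemma pd_exp {n : ℕ} {f : (Fin n → ℝ) → ℝ} {x : Fin n → ℝ}
    (hf : DifferentiableAt ℝ f x) (j : Fin n) :
    pd (fun z => Real.exp (f z)) j x = Real.exp (f x) * pd f j x := by
  unfold pd
  rw [(hf.hasFDerivAt.exp).fderiv]
  simp

/-- conformal change of s_j. -/
theorem conformal_change_s_j
    {n : ℕ} (hn : 2 ≤ n) (M : Set (Fin n → ℝ)) (hM : IsOpen M)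
    (a ainv abarInv : (Fin n → ℝ) → Matrix (Fin n) (Fin n) ℝ)
    (b : (Fin n → ℝ) → Fin n → ℝ) (σ : (Fin n → ℝ) → ℝ)
    (ha : ∀ i j, ContDiffOn ℝ (⊤ : ℕ∞) (fun z => a z i j) M)
    (hb : ∀ i, ContDiffOn ℝ (⊤ : ℕ∞) (fun z => b z i) M)
    (hσ : ContDiffOn ℝ (⊤ : ℕ∞) σ M)
    (hsym : ∀ x ∈ M, (a x).IsSymm)
    (hpos : ∀ x ∈ M, (a x).PosDef)
    (hInv : ∀ x ∈ M, a x * ainv x = 1)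
    (hInvBar : ∀ x ∈ M, abar σ a x * abarInv x = 1)
    (x : Fin n → ℝ) (hx : x ∈ M) :
    ∀ j, svec (abar σ a) abarInv (bbar σ b) x j
      = svec a ainv b x j
        + (bsq ainv b x * pd σ j x - rho ainv b σ x * b x j) / 2 := by
  intro j
  have hMx : M ∈ nhds x := hM.mem_nhds hx
  have hσd : DifferentiableAt ℝ σ x := (hσ.contDiffAt hMx).differentiableAt (by simp)
  have had : ∀ i j, DifferentiableAt ℝ (fun z => a z i j) x :=
    fun i j => ((ha i j).contDiffAt hMx).differentiableAt (by simp)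
  have hbd : ∀ i, DifferentiableAt ℝ (fun z => b z i) x :=
    fun i => ((hb i).contDiffAt hMx).differentiableAt (by simp)
  set e := Real.exp (σ x) with he
  have hene : e ≠ 0 := Real.exp_ne_zero _
  have hE : Real.exp (2 * σ x) = e * e := by rw [two_mul, Real.exp_add]
  -- inverse facts
  have hinv1 : a x * ainv x = 1 := hInv x hx
  have hinv2 : ainv x * a x = 1 := mul_eq_one_comm.mp hinv1
  have hdel1 : ∀ r k, (∑ s, ainv x r s * a x s k) = if r = k then 1 else 0 := by
    intro r k
    have h := congrArg (fun m : Matrix (Fin n) (Fin n) ℝ => m r k) hinv2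
    simpa [Matrix.mul_apply, Matrix.one_apply] using h
  have hAsym : ∀ i k, a x k i = a x i k := by
    intro i k
    have h := congrArg (fun m : Matrix (Fin n) (Fin n) ℝ => m i k) (hsym x hx)
    simpa [Matrix.transpose_apply] using h
  have hAisym : ∀ i k, ainv x k i = ainv x i k := by
    have h2 : (ainv x).transpose * a x = 1 := by
      have h := congrArg Matrix.transpose hinv1
      rwa [Matrix.transpose_mul, Matrix.transpose_one, hsym x hx] at h
    have h1 : (ainv x).transpose = ainv x := by
      rw [← Matrix.inv_eq_left_inv h2, Matrix.inv_eq_right_inv hinv1]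
    intro i k
    have h := congrArg (fun m : Matrix (Fin n) (Fin n) ℝ => m i k) h1
    simpa [Matrix.transpose_apply] using h
  -- the inverse of the conformal metric
  have hbarinv : abarInv x = (e * e)⁻¹ • ainv x := by
    have h1 : abar σ a x * ((e * e)⁻¹ • ainv x) = 1 := by
      show Real.exp (2 * σ x) • a x * ((e * e)⁻¹ • ainv x) = 1
      rw [hE, Matrix.mul_smul, Matrix.smul_mul, smul_smul, hinv1]
      rw [inv_mul_cancel₀ (mul_ne_zero hene hene), one_smul]
    rw [← Matrix.inv_eq_right_inv (hInvBar x hx), Matrix.inv_eq_right_inv h1]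
  have hbarinvApp : ∀ i r, abarInv x i r = (e * e)⁻¹ * ainv x i r := by
    intro i r; rw [hbarinv]; simp [Matrix.smul_apply]
  -- derivatives of the conformal data
  have hpdA : ∀ r k l, pd (fun z => abar σ a z r k) l x
      = (e * e) * (2 * pd σ l x * a x r k + pd (fun z => a z r k) l x) := by
    intro r k l
    have hfun : (fun z => abar σ a z r k) = fun z => Real.exp (2 * σ z) * a z r k := by
      funext z; simp [abar, Matrix.smul_apply]
    have hd2 : DifferentiableAt ℝ (fun z => (2 : ℝ) * σ z) x := hσd.const_mul 2
    rw [hfun, pd_mul hd2.exp (had r k) l, pd_exp hd2 l, pd_const_mul hσd 2 l, hE]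
    ring
  have hpdB : ∀ i l, pd (fun z => bbar σ b z i) l x
      = e * (pd σ l x * b x i + pd (fun z => b z i) l x) := by
    intro i l
    have hfun : (fun z => bbar σ b z i) = fun z => Real.exp (σ z) * b z i := by
      funext z; simp [bbar]
    rw [hfun, pd_mul hσd.exp (hbd i) l, pd_exp hσd l]
    ring
  -- Christoffel symbols of the conformal metric
  have hchr : ∀ i k l, chr (abar σ a) abarInv x i k l
      = chr a ainv x i k l + ∑ r, ainv x i r *
          (pd σ k x * a x r l + pd σ l x * a x r k - pd σ r x * a x k l) := by
    intro i k l
    have hsummand : ∀ r, abarInv x i r *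
        (pd (fun z => abar σ a z r l) k x + pd (fun z => abar σ a z r k) l x
          - pd (fun z => abar σ a z k l) r x)
      = ainv x i r * (pd (fun z => a z r l) k x + pd (fun z => a z r k) l x
          - pd (fun z => a z k l) r x)
        + 2 * (ainv x i r *
            (pd σ k x * a x r l + pd σ l x * a x r k - pd σ r x * a x k l)) := by
      intro r
      rw [hbarinvApp, hpdA, hpdA, hpdA]
      field_simp
      ring
    show (1 / 2 : ℝ) * ∑ r, _ = _
    rw [Finset.sum_congr rfl fun r _ => hsummand r, Finset.sum_add_distrib]
    rw [← Finset.mul_sum]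
    show (1 / 2 : ℝ) * (_ + 2 * _) = (1 / 2 : ℝ) * _ + _
    ring
  -- key contraction identity
  have hrho : ∀ i k, (∑ r, b x r * ∑ s, ainv x r s *
        (pd σ i x * a x s k + pd σ k x * a x s i - pd σ s x * a x i k))
      = pd σ i x * b x k + pd σ k x * b x i - a x i k * rho ainv b σ x := by
    intro i k
    have hinner : ∀ r, (∑ s, ainv x r s *
          (pd σ i x * a x s k + pd σ k x * a x s i - pd σ s x * a x i k))
        = pd σ i x * (if r = k then 1 else 0) + pd σ k x * (if r = i then 1 else 0)
          - a x i k * ∑ s, ainv x r s * pd σ s x := by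
      intro r
      have : ∀ s, ainv x r s * (pd σ i x * a x s k + pd σ k x * a x s i - pd σ s x * a x i k)
          = pd σ i x * (ainv x r s * a x s k) + pd σ k x * (ainv x r s * a x s i)
            - a x i k * (ainv x r s * pd σ s x) := by intro s; ring
      rw [Finset.sum_congr rfl fun s _ => this s, Finset.sum_sub_distrib,
        Finset.sum_add_distrib, ← Finset.mul_sum, ← Finset.mul_sum, ← Finset.mul_sum,
        hdel1 r k, hdel1 r i]
    rw [Finset.sum_congr rfl fun r _ => congrArg (b x r * ·) (hinner r)]
    have hsplit : ∀ r, b x r * (pd σ i x * (if r = k then 1 else 0)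
          + pd σ k x * (if r = i then 1 else 0) - a x i k * ∑ s, ainv x r s * pd σ s x)
        = pd σ i x * (if r = k then b x r else 0) + pd σ k x * (if r = i then b x r else 0)
          - a x i k * (b x r * ∑ s, ainv x r s * pd σ s x) := by
      intro r; split_ifs <;> ring
    rw [Finset.sum_congr rfl fun r _ => hsplit r, Finset.sum_sub_distrib,
      Finset.sum_add_distrib, ← Finset.mul_sum, ← Finset.mul_sum, ← Finset.mul_sum]
    congr 2
    · rw [Finset.sum_ite_eq' Finset.univ k (fun r => b x r)]; simp
    · rw [Finset.sum_ite_eq' Finset.univ i (fun r => b x r)]; simp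
    · -- ∑ r, b r * ∑ s, ainv r s * σ_s = rho
      simp only [rho, bup, Finset.mul_sum]
      rw [Finset.sum_comm]
      exact Finset.sum_congr rfl fun r _ => Finset.sum_congr rfl fun s _ => by
        rw [hAisym s r]; ring
  -- covariant derivative of the conformal 1-form
  have hcovd : ∀ i k, covd (abar σ a) abarInv (bbar σ b) x i k
      = e * (covd a ainv b x i k - pd σ i x * b x k + rho ainv b σ x * a x i k) := by
    intro i k
    show pd (fun z => bbar σ b z i) k x - _ = _
    rw [hpdB i k]
    have h2 : (∑ r, bbar σ b x r * chr (abar σ a) abarInv x r i k)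
        = e * (∑ r, b x r * chr a ainv x r i k)
          + e * (pd σ i x * b x k + pd σ k x * b x i - a x i k * rho ainv b σ x) := by
      have hterm : ∀ r, bbar σ b x r * chr (abar σ a) abarInv x r i k
          = e * (b x r * chr a ainv x r i k)
            + e * (b x r * ∑ s, ainv x r s *
                (pd σ i x * a x s k + pd σ k x * a x s i - pd σ s x * a x i k)) := by
        intro r
        rw [hchr r i k]
        show e * b x r * _ = _
        ring
      rw [Finset.sum_congr rfl fun r _ => hterm r, Finset.sum_add_distrib,
        ← Finset.mul_sum, ← Finset.mul_sum, hrho i k]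
    rw [h2]
    show _ - _ = e * (pd (fun z => b z i) k x - _ - _ + _)
    ring
  -- s_{ij} under the conformal change
  have hslow : ∀ i k, slow (abar σ a) abarInv (bbar σ b) x i k
      = e * (slow a ainv b x i k + (pd σ k x * b x i - pd σ i x * b x k) / 2) := by
    intro i k
    show (covd _ _ _ x i k - covd _ _ _ x k i) / 2 = _
    rw [hcovd i k, hcovd k i, hAsym i k]
    show _ = e * ((covd a ainv b x i k - covd a ainv b x k i) / 2 + _)
    ring
  -- s^i_j under the conformal change
  have hsup : ∀ r, sup (abar σ a) abarInv (bbar σ b) x r j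
      = e⁻¹ * ∑ t, ainv x r t *
          (slow a ainv b x t j + (pd σ j x * b x t - pd σ t x * b x j) / 2) := by
    intro r
    show (∑ t, abarInv x r t * slow (abar σ a) abarInv (bbar σ b) x t j) = _
    rw [Finset.mul_sum]
    refine Finset.sum_congr rfl fun t _ => ?_
    rw [hbarinvApp, hslow]
    field_simp
  -- final assembly
  show (∑ r, bbar σ b x r * sup (abar σ a) abarInv (bbar σ b) x r j) = _
  have hterm : ∀ r, bbar σ b x r * sup (abar σ a) abarInv (bbar σ b) x r j
      = b x r * (∑ t, ainv x r t * slow a ainv b x t j)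
        + (pd σ j x / 2) * (∑ t, ainv x r t * b x r * b x t)
        - (b x j / 2) * (∑ t, b x r * ainv x r t * pd σ t x) := by
    intro r
    rw [hsup r]
    show e * b x r * (e⁻¹ * _) = _
    rw [show e * b x r * (e⁻¹ * ∑ t, ainv x r t *
        (slow a ainv b x t j + (pd σ j x * b x t - pd σ t x * b x j) / 2))
      = b x r * ∑ t, ainv x r t *
        (slow a ainv b x t j + (pd σ j x * b x t - pd σ t x * b x j) / 2) by
        rw [mul_comm e, mul_assoc, mul_inv_cancel_left₀ hene]]
    rw [Finset.mul_sum, Finset.mul_sum, Finset.mul_sum, Finset.mul_sum,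
      ← Finset.sum_add_distrib, ← Finset.sum_sub_distrib]
    exact Finset.sum_congr rfl fun t _ => by ring
  rw [Finset.sum_congr rfl fun r _ => hterm r, Finset.sum_sub_distrib,
    Finset.sum_add_distrib, ← Finset.mul_sum, ← Finset.mul_sum]
  have h1 : svec a ainv b x j = ∑ r, b x r * (∑ t, ainv x r t * slow a ainv b x t j) := rfl
  have h2 : (∑ r, ∑ t, ainv x r t * b x r * b x t) = bsq ainv b x := rfl
  have h3 : (∑ r, ∑ t, b x r * ainv x r t * pd σ t x) = rho ainv b σ x := by
    simp only [rho, bup, Finset.mul_sum]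
    rw [Finset.sum_comm]
    exact Finset.sum_congr rfl fun r _ => Finset.sum_congr rfl fun t _ => by
      rw [hAisym t r]; ring
  rw [← h1, h2, h3]
  ring

end CD
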